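/- Let n ≥ 1 be an integer, κ > 0, γ = (n+2)/n and c₂ = Γ(n/2+1)/(π κ (n+2))^{n/2}. Let a > c₂ and r > 0, and define f(v) = a·1_{|v| ≤ r}(v). Then ρ_f = a rⁿ π^{n/2}/Γ(n/2+1), u_f = 0, ∫_{ℝⁿ} |v|² f(v) dv = (π^{n/2}/Γ(n/2+1)) r^{n+2} a · n/(n+2), and ∫_{ℝⁿ} |v|² M[f](v) dv = κ n ρ_f^{1+2/n} > ∫_{ℝⁿ} |v|² f(v) dv. In particular, ∫_{ℝⁿ} (|v|²/2) M[f](v) dv > ∫_{ℝⁿ} (|v|²/2) f(v) dv, so the minimization principle for the functional f ↦ ∫ (|v|²/2) f dv fails without the constraint f ≤ c₂. -/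

import Mathlib

open MeasureTheory Real

noncomputable section

abbrev En (n : ℕ) := EuclideanSpace ℝ (Fin n)

/-- the constant `c₁ = κ(n+2)` (end-point case `γ = (n+2)/n`). -/
def cc1e (n : ℕ) (κ : ℝ) : ℝ := κ * ((n : ℝ) + 2)

/-- the constant `c₂ = Γ(n/2+1)/(πκ(n+2))^{n/2}` (end-point case). -/
def cc2e (n : ℕ) (κ : ℝ) : ℝ :=
  Real.Gamma ((n : ℝ) / 2 + 1) / (Real.pi * κ * ((n : ℝ) + 2)) ^ ((n : ℝ) / 2)

/-- the end-point Maxwellian `M[ρ,u](v) = c₂ 1_{c₁ ρ^{2/n} ≥ |v-u|²}`. -/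
def MaxwE (n : ℕ) (κ ρ : ℝ) (u v : En n) : ℝ :=
  if ‖v - u‖ ^ 2 ≤ cc1e n κ * ρ ^ (2 / (n : ℝ)) then cc2e n κ else 0

/-- macroscopic density `ρ_f = ∫ f dv`. -/
def densF (n : ℕ) (f : En n → ℝ) : ℝ := ∫ v, f v

/-- bulk velocity `u_f = ρ_f⁻¹ ∫ v f dv` if `ρ_f ≠ 0`, else `0`. -/
def bulkF (n : ℕ) (f : En n → ℝ) : En n :=
  if densF n f = 0 then 0 else (densF n f)⁻¹ • ∫ v, f v • v

/-- the end-point Maxwellian `M[f] = M[ρ_f, u_f]` of a velocity profile `f`. -/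
def MaxwEOf (n : ℕ) (κ : ℝ) (f : En n → ℝ) (v : En n) : ℝ :=
  MaxwE n κ (densF n f) (bulkF n f) v

lemma sqrt_pi_pow (n : ℕ) : Real.sqrt Real.pi ^ n = Real.pi ^ ((n : ℝ) / 2) := by
  rw [Real.sqrt_eq_rpow, ← Real.rpow_natCast (Real.pi ^ ((1:ℝ)/2)) n,
    ← Real.rpow_mul Real.pi_pos.le]
  congr 1
  ring

lemma gamma_pos (n : ℕ) : 0 < Real.Gamma ((n : ℝ) / 2 + 1) :=
  Real.Gamma_pos_of_pos (by positivity)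

lemma EnInt_ind (n : ℕ) (hn : 1 ≤ n) (c R : ℝ) (hR : 0 ≤ R) :
    (∫ v : En n, (if ‖v‖ ≤ R then c else 0)) =
      c * (R ^ n * (Real.pi ^ ((n : ℝ) / 2) / Real.Gamma ((n : ℝ) / 2 + 1))) := by
  haveI : Nonempty (Fin n) := ⟨⟨0, hn⟩⟩
  have h : (fun v : En n => if ‖v‖ ≤ R then c else 0)
      = Set.indicator (Metric.closedBall (0 : En n) R) (fun _ => c) := by
    funext v
    by_cases hv : ‖v‖ ≤ R
    · rw [if_pos hv, Set.indicator_of_mem (mem_closedBall_zero_iff.mpr hv)]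
    · rw [if_neg hv, Set.indicator_of_notMem (fun hm => hv (mem_closedBall_zero_iff.mp hm))]
  have hg : (0:ℝ) ≤ Real.sqrt Real.pi ^ (Fintype.card (Fin n)) /
      Real.Gamma ((Fintype.card (Fin n) : ℝ) / 2 + 1) := by
    have := gamma_pos n
    simp only [Fintype.card_fin]
    positivity
  rw [h, integral_indicator measurableSet_closedBall, setIntegral_const, measureReal_def,
    EuclideanSpace.volume_closedBall, ENNReal.toReal_mul, ENNReal.toReal_pow,
    ENNReal.toReal_ofReal hR, ENNReal.toReal_ofReal hg]
  simp only [Fintype.card_fin, smul_eq_mul, sqrt_pi_pow]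
  ring

lemma EnInt_sq (n : ℕ) (hn : 1 ≤ n) (c R : ℝ) (hR : 0 ≤ R) :
    (∫ v : En n, ‖v‖ ^ 2 * (if ‖v‖ ≤ R then c else 0)) =
      c * ((n : ℝ) / ((n : ℝ) + 2)) * R ^ (n + 2) *
        (Real.pi ^ ((n : ℝ) / 2) / Real.Gamma ((n : ℝ) / 2 + 1)) := by
  haveI : Nonempty (Fin n) := ⟨⟨0, hn⟩⟩
  haveI : Nontrivial (En n) := inferInstance
  have key := MeasureTheory.integral_fun_norm_addHaar (volume : Measure (En n))
      (fun y : ℝ => y ^ 2 * (if y ≤ R then c else 0))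
  have hdim : Module.finrank ℝ (En n) = n := by
    simp [finrank_euclideanSpace]
  rw [hdim] at key
  rw [key]
  have hpt : ∀ y : ℝ, y ^ (n - 1) • (y ^ 2 * (if y ≤ R then c else 0)) =
      Set.indicator (Set.Iic R) (fun y => c * y ^ (n + 1)) y := by
    intro y
    by_cases hy : y ≤ R
    · rw [if_pos hy, Set.indicator_of_mem (Set.mem_Iic.mpr hy), smul_eq_mul, ← mul_assoc,
        ← pow_add]
      have : n - 1 + 2 = n + 1 := by omega
      rw [this]; ring
    · rw [if_neg hy, Set.indicator_of_notMem (by simpa using hy), smul_eq_mul]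
      ring
  simp only [hpt]
  rw [setIntegral_indicator measurableSet_Iic, Set.Ioi_inter_Iic,
    ← intervalIntegral.integral_of_le hR, intervalIntegral.integral_const_mul,
    integral_pow]
  have hvol : ((volume (Metric.ball (0 : En n) 1)).toReal : ℝ) =
      Real.pi ^ ((n : ℝ) / 2) / Real.Gamma ((n : ℝ) / 2 + 1) := by
    rw [EuclideanSpace.volume_ball, ENNReal.toReal_mul, ENNReal.toReal_pow,
      ENNReal.toReal_ofReal (by norm_num), ENNReal.toReal_ofReal]
    · simp [Fintype.card_fin, sqrt_pi_pow]
    · have := gamma_pos n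
      simp only [Fintype.card_fin]
      positivity
  rw [measureReal_def, hvol, nsmul_eq_mul, smul_eq_mul]
  have h2 : ((n : ℝ) + 2) ≠ 0 := by positivity
  push_cast
  field_simp
  ring

/-- Appendix A: counterexample to the minimization principle for the end-point case,
with `f = a·1_{|v|≤r}` and `a > c₂`: one computes `ρ_f`, `u_f = 0`, `∫ |v|² f dv`, and
`∫ |v|² M[f] dv = κ n ρ_f^{1+2/n} > ∫ |v|² f dv`, so `∫ (|v|²/2) M[f] dv > ∫ (|v|²/2) f dv`. -/
theorem stmt13 (n : ℕ) (hn : 1 ≤ n) (κ : ℝ) (hκ : 0 < κ)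
    (a r : ℝ) (ha : cc2e n κ < a) (hr : 0 < r) :
    densF n (fun v : En n => if ‖v‖ ≤ r then a else 0) =
        a * r ^ n * Real.pi ^ ((n : ℝ) / 2) / Real.Gamma ((n : ℝ) / 2 + 1) ∧
    bulkF n (fun v : En n => if ‖v‖ ≤ r then a else 0) = 0 ∧
    (∫ v : En n, ‖v‖ ^ 2 * (if ‖v‖ ≤ r then a else 0)) =
        Real.pi ^ ((n : ℝ) / 2) / Real.Gamma ((n : ℝ) / 2 + 1) * r ^ (n + 2) * a *
          ((n : ℝ) / ((n : ℝ) + 2)) ∧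
    (∫ v : En n, ‖v‖ ^ 2 * MaxwEOf n κ (fun v : En n => if ‖v‖ ≤ r then a else 0) v) =
        κ * n * (densF n (fun v : En n => if ‖v‖ ≤ r then a else 0)) ^ (1 + 2 / (n : ℝ)) ∧
    (∫ v : En n, ‖v‖ ^ 2 * (if ‖v‖ ≤ r then a else 0)) <
        (∫ v : En n, ‖v‖ ^ 2 * MaxwEOf n κ (fun v : En n => if ‖v‖ ≤ r then a else 0) v) ∧
    (∫ v : En n, ‖v‖ ^ 2 / 2 * (if ‖v‖ ≤ r then a else 0)) <
        (∫ v : En n, ‖v‖ ^ 2 / 2 *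
          MaxwEOf n κ (fun v : En n => if ‖v‖ ≤ r then a else 0) v) := by
  have hnpos : (0:ℝ) < n := by exact_mod_cast hn
  have hΓ := gamma_pos n
  set ω : ℝ := Real.pi ^ ((n : ℝ) / 2) / Real.Gamma ((n : ℝ) / 2 + 1) with hωdef
  have hω : 0 < ω := by positivity
  set f : En n → ℝ := fun v => if ‖v‖ ≤ r then a else 0 with hf
  have hc1 : 0 < cc1e n κ := by unfold cc1e; positivity
  have hc2 : 0 < cc2e n κ := by
    unfold cc2e
    have : (0:ℝ) < (Real.pi * κ * ((n : ℝ) + 2)) ^ ((n : ℝ) / 2) :=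
      Real.rpow_pos_of_pos (by positivity) _
    positivity
  have ha0 : 0 < a := hc2.trans ha
  -- density
  have h1 : densF n f = a * r ^ n * Real.pi ^ ((n : ℝ) / 2) / Real.Gamma ((n : ℝ) / 2 + 1) := by
    rw [densF, EnInt_ind n hn a r hr.le]
    field_simp
  have hρ : densF n f = a * ω * r ^ n := by rw [h1, hωdef]; field_simp
  have hρpos : 0 < densF n f := by rw [hρ]; positivity
  -- bulk velocity
  have h2 : bulkF n f = 0 := by
    have hS : (∫ v : En n, f v • v) = 0 := by
      have hneg := integral_neg_eq_self (fun v : En n => f v • v) (volume : Measure (En n))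
      have heq : (∫ v : En n, f (-v) • (-v)) = - ∫ v : En n, f v • v := by
        rw [← integral_neg]
        congr 1
        funext v
        have : f (-v) = f v := by simp [hf, norm_neg]
        rw [this, smul_neg]
      rw [heq] at hneg
      have h2S : (2:ℝ) • (∫ v : En n, f v • v) = 0 := by
        rw [two_smul]
        nth_rewrite 1 [← hneg]
        simp
      rcases smul_eq_zero.mp h2S with h | h
      · norm_num at h
      · exact h
    rw [bulkF, if_neg hρpos.ne', hS, smul_zero]
  -- ∫ |v|² f
  have h3 : (∫ v : En n, ‖v‖ ^ 2 * f v) =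
      ω * r ^ (n + 2) * a * ((n : ℝ) / ((n : ℝ) + 2)) := by
    rw [hf, EnInt_sq n hn a r hr.le]; ring
  -- the Maxwellian is an indicator of a ball of radius R
  set ρ : ℝ := densF n f with hρdef
  set R : ℝ := Real.sqrt (cc1e n κ * ρ ^ (2 / (n : ℝ))) with hRdef
  have hXpos : 0 < cc1e n κ * ρ ^ (2 / (n : ℝ)) :=
    mul_pos hc1 (Real.rpow_pos_of_pos hρpos _)
  have hR0 : 0 ≤ R := Real.sqrt_nonneg _
  have hM : MaxwEOf n κ f = fun v : En n => if ‖v‖ ≤ R then cc2e n κ else 0 := by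
    funext v
    rw [MaxwEOf, MaxwE, h2, sub_zero]
    congr 1
    simp only [eq_iff_iff]
    rw [hRdef, ← Real.le_sqrt (norm_nonneg v) hXpos.le]
  -- R^(n+2)
  have hRpow : R ^ (n + 2) = cc1e n κ ^ (((n:ℝ) + 2) / 2) * ρ ^ (1 + 2 / (n : ℝ)) := by
    have e1 : R ^ (n + 2) = (cc1e n κ * ρ ^ (2 / (n : ℝ))) ^ (((n:ℝ) + 2) / 2) := by
      rw [hRdef, Real.sqrt_eq_rpow, ← Real.rpow_natCast _ (n + 2),
        ← Real.rpow_mul hXpos.le]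
      congr 1
      push_cast
      ring
    rw [e1, Real.mul_rpow hc1.le (Real.rpow_pos_of_pos hρpos _).le,
      ← Real.rpow_mul hρpos.le]
    congr 1
    field_simp
  -- key constant identity: c₂ ω = c₁^{-n/2}
  have e1 : cc2e n κ * ω = cc1e n κ ^ (-((n:ℝ) / 2)) := by
    have hc1' : (0:ℝ) < κ * ((n:ℝ) + 2) := by positivity
    rw [hωdef]
    unfold cc2e cc1e
    rw [show Real.pi * κ * ((n:ℝ) + 2) = Real.pi * (κ * ((n:ℝ) + 2)) by ring,
      Real.mul_rpow Real.pi_pos.le hc1'.le, Real.rpow_neg hc1'.le]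
    have hπ : (0:ℝ) < Real.pi ^ ((n:ℝ)/2) := Real.rpow_pos_of_pos Real.pi_pos _
    have hκn : (0:ℝ) < (κ * ((n:ℝ) + 2)) ^ ((n:ℝ)/2) := Real.rpow_pos_of_pos hc1' _
    field_simp
  have e2 : cc1e n κ ^ (-((n:ℝ) / 2)) * cc1e n κ ^ (((n:ℝ) + 2) / 2) = cc1e n κ := by
    rw [← Real.rpow_add hc1, show -((n:ℝ)/2) + ((n:ℝ) + 2)/2 = 1 by ring, Real.rpow_one]
  -- ∫ |v|² M[f]
  have h4 : (∫ v : En n, ‖v‖ ^ 2 * MaxwEOf n κ f v) = κ * n * ρ ^ (1 + 2 / (n : ℝ)) := by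
    simp only [hM]
    rw [EnInt_sq n hn (cc2e n κ) R hR0, hRpow]
    have e3 : cc2e n κ * ((n:ℝ) / ((n:ℝ) + 2)) *
        (cc1e n κ ^ (((n:ℝ) + 2) / 2) * ρ ^ (1 + 2 / (n : ℝ))) * ω =
        cc2e n κ * ω * cc1e n κ ^ (((n:ℝ) + 2) / 2) * ρ ^ (1 + 2 / (n : ℝ)) *
          ((n:ℝ) / ((n:ℝ) + 2)) := by ring
    rw [e3, e1, e2]
    unfold cc1e
    have hn2 : ((n:ℝ) + 2) ≠ 0 := by positivity
    field_simp
  -- splitting ρ^{1+2/n}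
  have hn0 : (n:ℝ) ≠ 0 := hnpos.ne'
  have hsplit : ρ ^ (1 + 2 / (n : ℝ)) = a * ω * r ^ n * ((a * ω) ^ (2 / (n:ℝ)) * r ^ 2) := by
    rw [hρ, Real.rpow_add (by positivity), Real.rpow_one,
      Real.mul_rpow (by positivity) (by positivity),
      ← Real.rpow_natCast r n, ← Real.rpow_mul hr.le,
      show (n:ℝ) * (2 / (n:ℝ)) = 2 by field_simp; try ring, Real.rpow_two, Real.rpow_natCast]
  -- the strict inequality
  have hkey : 1 / ((n:ℝ) + 2) < κ * (a * ω) ^ (2 / (n:ℝ)) := by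
    have hlow : (cc2e n κ * ω) ^ (2 / (n:ℝ)) = (cc1e n κ)⁻¹ := by
      rw [e1, ← Real.rpow_mul hc1.le,
        show (-((n:ℝ)/2)) * (2/(n:ℝ)) = -1 by field_simp; try ring, Real.rpow_neg_one]
    have hlt : (cc2e n κ * ω) ^ (2/(n:ℝ)) < (a * ω) ^ (2/(n:ℝ)) :=
      Real.rpow_lt_rpow (by positivity) (mul_lt_mul_of_pos_right ha hω) (by positivity)
    rw [hlow] at hlt
    have hκc : κ * (cc1e n κ)⁻¹ = 1 / ((n:ℝ) + 2) := by
      unfold cc1e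
      field_simp
    calc 1 / ((n:ℝ) + 2) = κ * (cc1e n κ)⁻¹ := hκc.symm
      _ < κ * (a * ω) ^ (2/(n:ℝ)) := (mul_lt_mul_iff_right₀ hκ).mpr hlt
  have h5 : (∫ v : En n, ‖v‖ ^ 2 * f v) < (∫ v : En n, ‖v‖ ^ 2 * MaxwEOf n κ f v) := by
    rw [h3, h4, hsplit]
    have hfa : (0:ℝ) < (n:ℝ) * a * ω * r ^ (n + 2) := by positivity
    have el : ω * r ^ (n + 2) * a * ((n:ℝ) / ((n:ℝ) + 2)) =
        ((n:ℝ) * a * ω * r ^ (n + 2)) * (1 / ((n:ℝ) + 2)) := by ring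
    have er : κ * (n:ℝ) * (a * ω * r ^ n * ((a * ω) ^ (2/(n:ℝ)) * r ^ 2)) =
        ((n:ℝ) * a * ω * r ^ (n + 2)) * (κ * (a * ω) ^ (2/(n:ℝ))) := by
      rw [pow_add]; ring
    rw [el, er]
    exact (mul_lt_mul_iff_right₀ hfa).mpr hkey
  have h6 : (∫ v : En n, ‖v‖ ^ 2 / 2 * f v) <
      (∫ v : En n, ‖v‖ ^ 2 / 2 * MaxwEOf n κ f v) := by
    have hhalf : ∀ (x y : ℝ), x / 2 * y = 2⁻¹ * (x * y) := fun x y => by ring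
    simp only [hhalf]
    rw [MeasureTheory.integral_const_mul, MeasureTheory.integral_const_mul]
    exact (mul_lt_mul_iff_right₀ (by norm_num : (0:ℝ) < 2⁻¹)).mpr h5
  have h4' : (∫ v : En n, ‖v‖ ^ 2 * MaxwEOf n κ f v) = κ * n * ρ ^ (1 + 2 / (n : ℝ)) := h4
  exact ⟨h1, h2, h3, h4', h5, h6⟩
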